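/- (Theorem 2, full statement) Let K ≥ 2 and J ≥ 1 be integers. The family Q_J of J-class latent class models is identifiable — i.e., for any two models (ν_Q, λ_Q), (ν_R, λ_R) ∈ Q_J, equality of the conditional cell probabilities π̃_{Q,h} = π̃_{R,h} for all h ∈ H* implies π_{Q,0} = π_{R,0} — if and only if 2J ≤ K. -/

import Mathlib

/-!
Let `G(t) = ∑_h π_h ∏_{h_k = 1} t_k = ∑_j ν_j ∏_k (1 - λ_{jk} + λ_{jk} t_k)`. Equal conditional
cell probabilities make `(1 - π_{R,0}) G_Q - (1 - π_{Q,0}) G_R` the constant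
`π_{Q,0} - π_{R,0}`. If `2J ≤ K`, the `2J` classes of the two models can be given distinct
coordinates `k` and `t_k = 1 - 1/λ_{jk}` there; both generating functions vanish at this `t`, so
the constant is `0`.

If `K < 2J`, place classes at the nodes `i = 0, …, 2J - 1` with `λ = 1/(i+1)` and weight
proportional to `C(K,i) (i+1)^K`, the even nodes forming `Q` and the odd ones `R`. Up to the
normalising constants, `π_{Q,h} - π_{R,h} = ± Δ^K x^z |_{x=0}` where `z` is the number of zeros
of `h`: this vanishes for `h ≠ 0`, where `z < K`, and equals `± K!` at `h = 0`.
-/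

open Finset

/-- The set `H* = {0,1}^K \ {0}` of nonzero binary inclusion patterns. -/
def Hstar (K : ℕ) : Finset (Fin K → Bool) :=
  Finset.univ.filter (fun h => h ≠ fun _ => false)

/-- Cell probability `π_h = Σ_j ν_j ∏_k λ_{jk}^{h_k} (1-λ_{jk})^{1-h_k}` of a
    `J`-class latent class model. -/
def lcmCellProb {J K : ℕ} (ν : Fin J → ℝ) (lam : Fin J → Fin K → ℝ)
    (h : Fin K → Bool) : ℝ :=
  ∑ j, ν j * ∏ k, (if h k then lam j k else 1 - lam j k)

/-- Missing cell probability `π_0` of a latent class model. -/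
def lcmMissProb {J K : ℕ} (ν : Fin J → ℝ) (lam : Fin J → Fin K → ℝ) : ℝ :=
  lcmCellProb ν lam (fun _ => false)

/-- Conditional cell probability `π̃_h = π_h / (1 − π_0)`. -/
noncomputable def lcmCondCellProb {J K : ℕ} (ν : Fin J → ℝ)
    (lam : Fin J → Fin K → ℝ) (h : Fin K → Bool) : ℝ :=
  lcmCellProb ν lam h / (1 - lcmMissProb ν lam)

/-- Membership in the family `Q_J`: nonnegative weights summing to one, class
    probabilities in `(0,1]`, and coordinatewise distinct class probabilities. -/
def memQJ {J K : ℕ} (ν : Fin J → ℝ) (lam : Fin J → Fin K → ℝ) : Prop :=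
  (∀ j, 0 ≤ ν j) ∧ (∑ j, ν j = 1) ∧
    (∀ j k, lam j k ∈ Set.Ioc (0 : ℝ) 1) ∧
    (∀ j j', j ≠ j' → ∀ k, lam j k ≠ lam j' k)

def IsLatentClassModel {J K : ℕ} (ν : Fin J → ℝ) (lam : Fin J → Fin K → ℝ) : Prop :=
  (∀ j, 0 ≤ ν j) ∧ (∑ j, ν j = 1) ∧ (∀ j k, lam j k ∈ Set.Ioc (0 : ℝ) 1)

lemma memQJ.isLatentClassModel {J K : ℕ} {ν : Fin J → ℝ} {lam : Fin J → Fin K → ℝ}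
    (h : memQJ ν lam) : IsLatentClassModel ν lam :=
  ⟨h.1, h.2.1, h.2.2.1⟩

section GeneratingFunction

variable {J K : ℕ} (ν : Fin J → ℝ) (lam : Fin J → Fin K → ℝ)

noncomputable def lcmGenFun (t : Fin K → ℝ) : ℝ :=
  ∑ h : Fin K → Bool, lcmCellProb ν lam h * ∏ k, if h k then t k else 1

lemma lcmGenFun_eq_sum_prod (t : Fin K → ℝ) :
    lcmGenFun ν lam t = ∑ j, ν j * ∏ k, (1 - lam j k + lam j k * t k) := by
  have hfactor : ∀ j k, 1 - lam j k + lam j k * t k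
      = ∑ b : Bool, if b then lam j k * t k else 1 - lam j k := fun j k => by
    rw [Fintype.sum_bool, if_pos rfl, if_neg Bool.false_ne_true, add_comm]
  simp only [lcmGenFun, lcmCellProb, hfactor, Fintype.prod_sum, Finset.sum_mul, Finset.mul_sum]
  rw [Finset.sum_comm]
  refine Finset.sum_congr rfl fun j _ => Finset.sum_congr rfl fun h _ => ?_
  rw [mul_assoc, ← Finset.prod_mul_distrib]
  congr 1
  refine Finset.prod_congr rfl fun k _ => ?_
  cases h k <;> simp

lemma lcmGenFun_eq_lcmMissProb_add (t : Fin K → ℝ) :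
    lcmGenFun ν lam t = lcmMissProb ν lam
      + ∑ h ∈ Hstar K, lcmCellProb ν lam h * ∏ k, if h k then t k else 1 := by
  rw [Hstar, Finset.filter_ne', lcmGenFun,
    ← Finset.add_sum_erase _ _ (Finset.mem_univ fun _ => false)]
  simp [lcmMissProb]

lemma sum_Hstar_lcmCellProb :
    ∑ h ∈ Hstar K, lcmCellProb ν lam h = ∑ j, ν j - lcmMissProb ν lam := by
  have h := (lcmGenFun_eq_lcmMissProb_add ν lam 1).symm.trans (lcmGenFun_eq_sum_prod ν lam 1)
  simp only [Pi.one_apply, ite_self, Finset.prod_const_one, mul_one, sub_add_cancel] at h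
  linarith

lemma lcmGenFun_eq_zero {t : Fin K → ℝ}
    (ht : ∀ j, ∃ k, lam j k ≠ 0 ∧ t k = 1 - (lam j k)⁻¹) : lcmGenFun ν lam t = 0 := by
  rw [lcmGenFun_eq_sum_prod]
  refine Finset.sum_eq_zero fun j _ => mul_eq_zero_of_right _ ?_
  obtain ⟨k, hk0, hk⟩ := ht j
  exact Finset.prod_eq_zero (Finset.mem_univ k) (by rw [hk]; field_simp; ring)

end GeneratingFunction

lemma lcmMissProb_lt_one {J K : ℕ} {ν : Fin J → ℝ} {lam : Fin J → Fin K → ℝ}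
    (hm : IsLatentClassModel ν lam) (hK : 0 < K) : lcmMissProb ν lam < 1 := by
  obtain ⟨hν, hsum, hlam⟩ := hm
  have hprod : ∀ j, ∏ k, (1 - lam j k) < 1 := fun j => by
    let k₀ : Fin K := ⟨0, hK⟩
    calc ∏ k, (1 - lam j k) ≤ ∏ k ∈ {k₀}, (1 - lam j k) :=
          Finset.prod_le_prod_of_subset_of_le_one (Finset.subset_univ _)
            (fun k _ => sub_nonneg.2 (hlam j k).2) (fun k _ _ => by linarith [(hlam j k).1])
      _ < 1 := by rw [Finset.prod_singleton]; linarith [(hlam j k₀).1]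
  obtain ⟨j₀, -, hj₀⟩ := Finset.exists_lt_of_sum_lt (f := fun _ => (0 : ℝ)) (g := ν)
    (by rw [hsum, Finset.sum_const_zero]; exact one_pos)
  calc lcmMissProb ν lam = ∑ j, ν j * ∏ k, (1 - lam j k) := by simp [lcmMissProb, lcmCellProb]
    _ < ∑ j, ν j := Finset.sum_lt_sum
        (fun j _ => mul_le_of_le_one_right (hν j) (hprod j).le)
        ⟨j₀, Finset.mem_univ _, mul_lt_of_lt_one_right hj₀ (hprod j₀)⟩
    _ = 1 := hsum

lemma Fin.exists_forall_exists_eq_apply {α : Type*} [Inhabited α] {m K : ℕ} (hmK : m ≤ K)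
    (a : Fin m → Fin K → α) : ∃ t : Fin K → α, ∀ i, ∃ k, t k = a i k :=
  ⟨Function.extend (Fin.castLE hmK) (fun i => a i (Fin.castLE hmK i)) default,
    fun i => ⟨Fin.castLE hmK i, (Fin.castLE_injective hmK).extend_apply _ _ _⟩⟩

theorem lcmMissProb_eq_of_lcmCondCellProb_eq {J K : ℕ} (hK : 0 < K) (h2J : 2 * J ≤ K)
    {νQ νR : Fin J → ℝ} {lamQ lamR : Fin J → Fin K → ℝ}
    (hQ : IsLatentClassModel νQ lamQ) (hR : IsLatentClassModel νR lamR)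
    (hcond : ∀ h ∈ Hstar K, lcmCondCellProb νQ lamQ h = lcmCondCellProb νR lamR h) :
    lcmMissProb νQ lamQ = lcmMissProb νR lamR := by
  set mQ := lcmMissProb νQ lamQ
  set mR := lcmMissProb νR lamR
  have hQ1 : 1 - mQ ≠ 0 := sub_ne_zero.2 (lcmMissProb_lt_one hQ hK).ne'
  have hR1 : 1 - mR ≠ 0 := sub_ne_zero.2 (lcmMissProb_lt_one hR hK).ne'
  have hcross : ∀ h ∈ Hstar K,
      (1 - mR) * lcmCellProb νQ lamQ h = (1 - mQ) * lcmCellProb νR lamR h := fun h hh => by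
    have := hcond h hh
    rw [lcmCondCellProb, lcmCondCellProb, div_eq_div_iff hQ1 hR1] at this
    linarith
  obtain ⟨t, ht⟩ := Fin.exists_forall_exists_eq_apply (by omega : J + J ≤ K)
    (Fin.append (fun j k => 1 - (lamQ j k)⁻¹) (fun j k => 1 - (lamR j k)⁻¹))
  have hGQ : lcmGenFun νQ lamQ t = 0 := lcmGenFun_eq_zero νQ lamQ fun j => by
    obtain ⟨k, hk⟩ := ht (Fin.castAdd J j)
    exact ⟨k, (hQ.2.2 j k).1.ne', by rwa [Fin.append_left] at hk⟩
  have hGR : lcmGenFun νR lamR t = 0 := lcmGenFun_eq_zero νR lamR fun j => by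
    obtain ⟨k, hk⟩ := ht (Fin.natAdd J j)
    exact ⟨k, (hR.2.2 j k).1.ne', by rwa [Fin.append_right] at hk⟩
  have hdiff : (1 - mR) * lcmGenFun νQ lamQ t - (1 - mQ) * lcmGenFun νR lamR t = mQ - mR := by
    rw [lcmGenFun_eq_lcmMissProb_add, lcmGenFun_eq_lcmMissProb_add, mul_add, mul_add,
      Finset.mul_sum, Finset.mul_sum,
      Finset.sum_congr rfl fun h hh => by rw [← mul_assoc, hcross h hh, mul_assoc]]
    ring
  rw [hGQ, hGR] at hdiff
  linarith

section Normalization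

variable {J K : ℕ}

noncomputable def normalizeWeights (w : Fin J → ℝ) : Fin J → ℝ := fun j => w j / ∑ i, w i

lemma memQJ_normalizeWeights {w : Fin J → ℝ} {lam : Fin J → Fin K → ℝ} (hw : ∀ j, 0 ≤ w j)
    (hsum : 0 < ∑ j, w j) (hlam : ∀ j k, lam j k ∈ Set.Ioc (0 : ℝ) 1)
    (hdist : ∀ j j', j ≠ j' → ∀ k, lam j k ≠ lam j' k) :
    memQJ (normalizeWeights w) lam :=
  ⟨fun j => div_nonneg (hw j) hsum.le, by
    simp only [normalizeWeights]; rw [← Finset.sum_div, div_self hsum.ne'],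
    hlam, hdist⟩

lemma lcmCellProb_normalizeWeights (w : Fin J → ℝ) (lam : Fin J → Fin K → ℝ) (h : Fin K → Bool) :
    lcmCellProb (normalizeWeights w) lam h = lcmCellProb w lam h / ∑ j, w j := by
  simp only [lcmCellProb, normalizeWeights, Finset.sum_div, div_mul_eq_mul_div]

lemma lcmMissProb_normalizeWeights (w : Fin J → ℝ) (lam : Fin J → Fin K → ℝ) :
    lcmMissProb (normalizeWeights w) lam = lcmMissProb w lam / ∑ j, w j :=
  lcmCellProb_normalizeWeights w lam _

lemma lcmCondCellProb_normalizeWeights {w : Fin J → ℝ} (hw : ∑ j, w j ≠ 0)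
    (lam : Fin J → Fin K → ℝ) (h : Fin K → Bool) :
    lcmCondCellProb (normalizeWeights w) lam h
      = lcmCellProb w lam h / ∑ h' ∈ Hstar K, lcmCellProb w lam h' := by
  rw [lcmCondCellProb, lcmMissProb_normalizeWeights, lcmCellProb_normalizeWeights,
    one_sub_div hw, div_div_div_cancel_right₀ hw, sum_Hstar_lcmCellProb]

end Normalization

lemma sum_range_succ_neg_one_pow_mul_choose_mul_pow (K p : ℕ) :
    ∑ i ∈ range (K + 1), (-1 : ℝ) ^ i * K.choose i * (i : ℝ) ^ p
      = (-1) ^ K * (fwdDiff 1)^[K] (fun x : ℝ => x ^ p) 0 := by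
  rw [fwdDiff_iter_eq_sum_shift, Finset.mul_sum]
  refine Finset.sum_congr rfl fun i hi => ?_
  have hsign : (-1 : ℝ) ^ K * (-1) ^ (K - i) = (-1) ^ i := by
    rw [← pow_add, show K + (K - i) = i + 2 * (K - i) by grind, pow_add, pow_mul]
    norm_num
  rw [zsmul_eq_mul, ← mul_assoc]
  push_cast
  rw [← mul_assoc, hsign]
  simp

lemma sum_range_two_mul_neg_one_pow_mul (f : ℕ → ℝ) (n : ℕ) :
    ∑ i ∈ range (2 * n), (-1 : ℝ) ^ i * f i
      = ∑ j ∈ range n, f (2 * j) - ∑ j ∈ range n, f (2 * j + 1) := by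
  induction n with
  | zero => simp
  | succ n ih =>
    rw [show 2 * (n + 1) = 2 * n + 1 + 1 by ring, Finset.sum_range_succ, Finset.sum_range_succ, ih,
      Finset.sum_range_succ, Finset.sum_range_succ, pow_succ, pow_mul]
    norm_num
    ring

/-- Both models put the same mass `S` on `H*`; a common missing probability `m < 1` would force
`∑ wQ = S / (1 - m) = ∑ wR` and hence equal unnormalised `π_0`. -/
lemma lcmMissProb_normalizeWeights_ne {J K : ℕ} (hK : 0 < K) {wQ wR : Fin J → ℝ}
    {lamQ lamR : Fin J → Fin K → ℝ} (hQ : IsLatentClassModel (normalizeWeights wQ) lamQ)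
    (hUQ : 0 < ∑ j, wQ j) (hUR : 0 < ∑ j, wR j)
    (hS : ∑ h ∈ Hstar K, lcmCellProb wQ lamQ h = ∑ h ∈ Hstar K, lcmCellProb wR lamR h)
    (hne : lcmMissProb wQ lamQ ≠ lcmMissProb wR lamR) :
    lcmMissProb (normalizeWeights wQ) lamQ ≠ lcmMissProb (normalizeWeights wR) lamR := by
  intro heq
  have hlt := lcmMissProb_lt_one hQ hK
  rw [lcmMissProb_normalizeWeights, lcmMissProb_normalizeWeights,
    div_eq_div_iff hUQ.ne' hUR.ne'] at heq
  rw [lcmMissProb_normalizeWeights, div_lt_one hUQ] at hlt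
  rw [sum_Hstar_lcmCellProb, sum_Hstar_lcmCellProb] at hS
  have hprod : (∑ j, wQ j - lcmMissProb wQ lamQ) * (lcmMissProb wQ lamQ - lcmMissProb wR lamR)
      = 0 := by
    linear_combination heq + lcmMissProb wQ lamQ * hS
  exact hne (sub_eq_zero.1 ((mul_eq_zero.1 hprod).resolve_left (sub_ne_zero.2 hlt.ne')))

section NodeModel

def numZeros {K : ℕ} (h : Fin K → Bool) : ℕ := #{k | h k = false}

lemma numZeros_lt {K : ℕ} {h : Fin K → Bool} (hh : h ≠ fun _ => false) : numZeros h < K := by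
  obtain ⟨k, hk⟩ := Function.ne_iff.1 hh
  calc numZeros h < #(univ : Finset (Fin K)) :=
        Finset.card_lt_card (Finset.filter_ssubset.2 ⟨k, Finset.mem_univ _, by simpa using hk⟩)
    _ = K := by simp

lemma numZeros_false (K : ℕ) : numZeros (fun _ : Fin K => false) = K := by simp [numZeros]

lemma pow_mul_prod_ite_inv_add_one {K : ℕ} {x : ℝ} (hx : x + 1 ≠ 0) (h : Fin K → Bool) :
    (x + 1) ^ K * ∏ k, (if h k then (x + 1)⁻¹ else 1 - (x + 1)⁻¹) = x ^ numZeros h := by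
  rw [← Fin.prod_const, ← Finset.prod_mul_distrib]
  calc ∏ k, (x + 1) * (if h k then (x + 1)⁻¹ else 1 - (x + 1)⁻¹)
      = ∏ k, if h k then 1 else x :=
        Finset.prod_congr rfl fun k _ => by split_ifs <;> field_simp; ring
    _ = x ^ numZeros h := by simp [Finset.prod_ite, numZeros]

variable (K : ℕ) {J : ℕ} (a : Fin J → ℕ)

noncomputable def nodeWeight (j : Fin J) : ℝ := K.choose (a j) * ((a j : ℝ) + 1) ^ K

noncomputable def nodeLam (j : Fin J) (_ : Fin K) : ℝ := ((a j : ℝ) + 1)⁻¹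

lemma lcmCellProb_nodeWeight (h : Fin K → Bool) :
    lcmCellProb (nodeWeight K a) (nodeLam K a) h
      = ∑ j, (K.choose (a j) : ℝ) * (a j : ℝ) ^ numZeros h := by
  refine Finset.sum_congr rfl fun j _ => ?_
  rw [nodeWeight, mul_assoc, ← pow_mul_prod_ite_inv_add_one (by positivity) h]
  rfl

end NodeModel

lemma sum_nodeWeight_pos (K : ℕ) {J : ℕ} {a : Fin J → ℕ} {j : Fin J} (hj : a j ≤ K) :
    0 < ∑ i, nodeWeight K a i :=
  Finset.sum_pos' (fun i _ => by unfold nodeWeight; positivity)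
    ⟨j, Finset.mem_univ _, by unfold nodeWeight; have := Nat.choose_pos hj; positivity⟩

lemma memQJ_nodeModel (K : ℕ) {J : ℕ} {a : Fin J → ℕ} (ha : Function.Injective a)
    (hpos : 0 < ∑ j, nodeWeight K a j) :
    memQJ (normalizeWeights (nodeWeight K a)) (nodeLam K a) := by
  refine memQJ_normalizeWeights (fun j => by unfold nodeWeight; positivity) hpos
    (fun j k => ⟨by unfold nodeLam; positivity, inv_le_one_of_one_le₀ (by simp)⟩)
    (fun j j' hjj' k hlam => hjj' (ha ?_))
  simpa [nodeLam] using hlam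

lemma lcmCellProb_even_sub_odd {K J : ℕ} (hKJ : K < 2 * J) (h : Fin K → Bool) :
    lcmCellProb (nodeWeight K fun j : Fin J => 2 * j) (nodeLam K fun j : Fin J => 2 * j) h
      - lcmCellProb (nodeWeight K fun j : Fin J => 2 * j + 1)
          (nodeLam K fun j : Fin J => 2 * j + 1) h
      = (-1) ^ K * (fwdDiff 1)^[K] (fun x : ℝ => x ^ numZeros h) 0 := by
  set f : ℕ → ℝ := fun i => K.choose i * (i : ℝ) ^ numZeros h
  rw [lcmCellProb_nodeWeight, lcmCellProb_nodeWeight,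
    Fin.sum_univ_eq_sum_range (fun j => f (2 * j)),
    Fin.sum_univ_eq_sum_range (fun j => f (2 * j + 1)),
    ← sum_range_two_mul_neg_one_pow_mul, ← sum_range_succ_neg_one_pow_mul_choose_mul_pow]
  refine (Finset.sum_subset (Finset.range_subset_range.2 (by omega)) fun i _ hi => ?_).symm.trans
    (Finset.sum_congr rfl fun i _ => by rw [mul_assoc])
  rw [Finset.mem_range, not_lt] at hi
  simp [f, Nat.choose_eq_zero_of_lt (Nat.lt_of_succ_le hi)]

theorem exists_lcmCondCellProb_eq_lcmMissProb_ne {K J : ℕ} (hK : 0 < K) (hKJ : K < 2 * J) :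
    ∃ (νQ νR : Fin J → ℝ) (lamQ lamR : Fin J → Fin K → ℝ),
      memQJ νQ lamQ ∧ memQJ νR lamR ∧
      (∀ h ∈ Hstar K, lcmCondCellProb νQ lamQ h = lcmCondCellProb νR lamR h) ∧
      lcmMissProb νQ lamQ ≠ lcmMissProb νR lamR := by
  set wQ := nodeWeight K fun j : Fin J => 2 * j
  set wR := nodeWeight K fun j : Fin J => 2 * j + 1
  set lamQ := nodeLam K fun j : Fin J => 2 * j
  set lamR := nodeLam K fun j : Fin J => 2 * j + 1
  have hUQ : 0 < ∑ j, wQ j := sum_nodeWeight_pos K (j := ⟨0, by omega⟩) (by simp)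
  have hUR : 0 < ∑ j, wR j := sum_nodeWeight_pos K (j := ⟨0, by omega⟩) (by simp; omega)
  have hQ := memQJ_nodeModel K (fun i j hij => Fin.ext (by simpa using hij)) hUQ
  have hR := memQJ_nodeModel K (fun i j hij => Fin.ext (by simpa using hij)) hUR
  have hcell : ∀ h ∈ Hstar K, lcmCellProb wQ lamQ h = lcmCellProb wR lamR h := fun h hh => by
    have hz := numZeros_lt (Finset.mem_filter.1 hh).2
    rw [← sub_eq_zero, lcmCellProb_even_sub_odd hKJ, fwdDiff_iter_pow_eq_zero_of_lt hz]
    simp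
  have hmiss : lcmMissProb wQ lamQ - lcmMissProb wR lamR = (-1) ^ K * K.factorial := by
    rw [lcmMissProb, lcmMissProb, lcmCellProb_even_sub_odd hKJ, numZeros_false,
      fwdDiff_iter_eq_factorial]
    simp
  have hS : ∑ h ∈ Hstar K, lcmCellProb wQ lamQ h = ∑ h ∈ Hstar K, lcmCellProb wR lamR h :=
    Finset.sum_congr rfl hcell
  refine ⟨_, _, lamQ, lamR, hQ, hR, fun h hh => ?_, ?_⟩
  · rw [lcmCondCellProb_normalizeWeights hUQ.ne', lcmCondCellProb_normalizeWeights hUR.ne',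
      hcell h hh, hS]
  · refine lcmMissProb_normalizeWeights_ne hK hQ.isLatentClassModel hUQ hUR hS ?_
    rw [← sub_ne_zero, hmiss]
    exact mul_ne_zero (pow_ne_zero _ (by norm_num)) (by positivity)

theorem lcm_identifiable_iff_general (K J : ℕ) (hK : 2 ≤ K) :
    (∀ (νQ νR : Fin J → ℝ) (lamQ lamR : Fin J → Fin K → ℝ),
        memQJ νQ lamQ → memQJ νR lamR →
        (∀ h ∈ Hstar K, lcmCondCellProb νQ lamQ h = lcmCondCellProb νR lamR h) →
        lcmMissProb νQ lamQ = lcmMissProb νR lamR) ↔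
    2 * J ≤ K := by
  refine ⟨fun hident => ?_, fun h2J νQ νR lamQ lamR hQ hR hcond =>
    lcmMissProb_eq_of_lcmCondCellProb_eq (by omega) h2J hQ.isLatentClassModel
      hR.isLatentClassModel hcond⟩
  by_contra! hlt
  obtain ⟨νQ, νR, lamQ, lamR, hQ, hR, hcond, hne⟩ :=
    exists_lcmCondCellProb_eq_lcmMissProb_ne (by omega) hlt
  exact hne (hident νQ νR lamQ lamR hQ hR hcond)

/-- Theorem 2: the family `Q_J` of `J`-class latent class models
    is identifiable if and only if `2J ≤ K`. -/
theorem lcm_identifiable_iff (K J : ℕ) (hK : 2 ≤ K) (hJ : 1 ≤ J) :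
    (∀ (νQ νR : Fin J → ℝ) (lamQ lamR : Fin J → Fin K → ℝ),
        memQJ νQ lamQ → memQJ νR lamR →
        (∀ h ∈ Hstar K, lcmCondCellProb νQ lamQ h = lcmCondCellProb νR lamR h) →
        lcmMissProb νQ lamQ = lcmMissProb νR lamR) ↔
    2 * J ≤ K :=
  lcm_identifiable_iff_general K J hK
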